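/- There exist δ > 0 and C > 0 such that for all α, β ∈ ℝ⁵ with |α| ≤ δ, |β| ≤ δ and every j ∈ {1,2,3,4,5}: ‖g_α − g_β‖ + ‖h_{α,j} − h_{β,j}‖ ≤ C |α − β|, where ‖u‖² := ‖u₁‖²_{H³(B⁵)} + ‖u₂‖²_{H²(B⁵)} for a pair u = (u₁,u₂), g_α(ξ) := ( A₀(α)(A₀(α) − A_k(α)ξ^k)^{−2}, 2A₀(α)²(A₀(α) − A_k(α)ξ^k)^{−3} ), and h_{α,j}(ξ) := ∂_{α^j} Ψ_α(ξ) is the partial derivative with respect to α^j of Ψ_α(ξ) := ( ψ_α(ξ), ξ^k ∂_{ξ^k} ψ_α(ξ) + ψ_α(ξ) ). -/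

import Mathlib

open MeasureTheory

noncomputable section

abbrev E5 : Type := EuclideanSpace ℝ (Fin 5)

/-- the partial derivative in the `i`-th coordinate direction -/
def pdR (i : Fin 5) (f : E5 → ℝ) : E5 → ℝ :=
  fun x => fderiv ℝ f x (EuclideanSpace.single i 1)

/-- the iterated partial derivative `∂^β` for a multi-index `β` -/
def pdMR (β : Fin 5 → ℕ) (f : E5 → ℝ) : E5 → ℝ :=
  (List.finRange 5).foldr (fun i g => (pdR i)^[β i] g) f

/-- the open unit ball `B⁵ ⊆ ℝ⁵` -/
def ball5 : Set E5 := Metric.ball 0 1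

/-- the squared `L²` norm over the unit ball -/
def bL2SqR (f : E5 → ℝ) : ℝ := ∫ x in ball5, ‖f x‖ ^ 2

/-- the squared `H^m(B⁵)` norm: `∑_{|β| ≤ m} ‖∂^β f‖²_{L²(B⁵)}` -/
def HSqR (m : ℕ) (f : E5 → ℝ) : ℝ :=
  ∑ β : Fin 5 → Fin (m + 1),
    if (∑ i, (β i : ℕ)) ≤ m then bL2SqR (pdMR (fun i => (β i : ℕ)) f) else 0

/-- `A₀(α) = cosh(α⁵)···cosh(α¹)` -/
def A0 (α : E5) : ℝ := ∏ k, Real.cosh (α k)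

/-- `A_j(α) = cosh(α⁵)···cosh(α^{j+1}) sinh(α^j)` -/
def Ac (α : E5) (j : Fin 5) : ℝ :=
  (∏ k ∈ Finset.Ioi j, Real.cosh (α k)) * Real.sinh (α j)

/-- `ψ_α(ξ) = √2 / (A₀(α) − A_j(α)ξ^j)` -/
def psiA (α : E5) (ξ : E5) : ℝ :=
  Real.sqrt 2 / (A0 α - ∑ j, Ac α j * ξ j)

/-- first component of the eigenfunction `g_α` (eigenvalue 1) -/
def g1 (α : E5) (ξ : E5) : ℝ := A0 α / (A0 α - ∑ k, Ac α k * ξ k) ^ 2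

/-- second component of the eigenfunction `g_α` (eigenvalue 1) -/
def g2 (α : E5) (ξ : E5) : ℝ := 2 * (A0 α) ^ 2 / (A0 α - ∑ k, Ac α k * ξ k) ^ 3

/-- first component of `h_{α,j} = ∂_{α^j} Ψ_α`, where `Ψ_α = (ψ_α, ξ^k∂_kψ_α + ψ_α)` -/
def h1 (α : E5) (j : Fin 5) (ξ : E5) : ℝ :=
  fderiv ℝ (fun a : E5 => psiA a ξ) α (EuclideanSpace.single j 1)

/-- second component of `h_{α,j} = ∂_{α^j} Ψ_α`, where `Ψ_α = (ψ_α, ξ^k∂_kψ_α + ψ_α)` -/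
def h2 (α : E5) (j : Fin 5) (ξ : E5) : ℝ :=
  fderiv ℝ (fun a : E5 => (∑ k, ξ k * pdR k (psiA a) ξ) + psiA a ξ) α
    (EuclideanSpace.single j 1)

/-! All the functions involved are smooth jointly in `(α, ξ)` on the open set where
`A₀(α) − A_j(α) ξ^j > 0`, and this set contains `ℝ⁵ × closedBall 0 1` because `(A₀, A₁, …, A₅)`
is a unit timelike vector: `A₀² − Σ A_j² = 1`, so `|A_j ξ^j| < A₀` by Cauchy–Schwarz. The
difference `Φ(α, ·) − Φ(β, ·)` is the slice at `(α, β)` of a smooth family vanishing on the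
diagonal, so each of its `ξ`-derivatives is a Lipschitz function of `(α, β)` on a compact convex
set, uniformly in `ξ`, and vanishes at `(β, β)`; it is therefore `O(|α − β|)` pointwise, and
integrating over the unit ball gives the `H^m` bounds. -/

open Metric Filter Topology
open scoped ContDiff

theorem rel_iterate {α β : Type*} (R : α → β → Prop) {S : α → α} {T : β → β}
    (hST : ∀ a b, R a b → R (S a) (T b)) (n : ℕ) {a : α} {b : β} (hab : R a b) :
    R (S^[n] a) (T^[n] b) := by
  induction n with
  | zero => exact hab
  | succ n ih =>
    rw [Function.iterate_succ_apply', Function.iterate_succ_apply']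
    exact hST _ _ ih

theorem List.rel_foldr_iterate {α β ι : Type*} (R : α → β → Prop) {S : ι → α → α}
    {T : ι → β → β} (hST : ∀ i a b, R a b → R (S i a) (T i b)) (n : ι → ℕ) (l : List ι)
    {a : α} {b : β} (hab : R a b) :
    R (l.foldr (fun i a => (S i)^[n i] a) a) (l.foldr (fun i b => (T i)^[n i] b) b) := by
  induction l with
  | nil => exact hab
  | cons i l ih => exact rel_iterate R (hST i) (n i) ih

section Slices

variable {P E F : Type*} [NormedAddCommGroup P] [NormedSpace ℝ P] [NormedAddCommGroup E]
  [NormedSpace ℝ E] [NormedAddCommGroup F] [NormedSpace ℝ F]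

theorem fderiv_slice_fst_apply {G : P × E → F} {p : P} {ξ : E}
    (hG : DifferentiableAt ℝ G (p, ξ)) (v : P) :
    fderiv ℝ (fun p' => G (p', ξ)) p v = fderiv ℝ G (p, ξ) (v, 0) := by
  rw [HasFDerivAt.fderiv (f := fun p' => G (p', ξ))
    (hG.hasFDerivAt.comp p (hasFDerivAt_prodMk_left p ξ))]
  rfl

theorem fderiv_slice_snd_apply {G : P × E → F} {p : P} {ξ : E}
    (hG : DifferentiableAt ℝ G (p, ξ)) (v : E) :
    fderiv ℝ (fun ξ' => G (p, ξ')) ξ v = fderiv ℝ G (p, ξ) (0, v) := by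
  rw [HasFDerivAt.fderiv (f := fun ξ' => G (p, ξ'))
    (hG.hasFDerivAt.comp ξ (hasFDerivAt_prodMk_right p ξ))]
  rfl

theorem ContDiffOn.fderiv_slice_fst_apply {V : Set (P × E)} (hV : IsOpen V) {G : P × E → F}
    (hG : ContDiffOn ℝ ∞ G V) (v : P) :
    ContDiffOn ℝ ∞ (fun q => fderiv ℝ (fun p' => G (p', q.2)) q.1 v) V :=
  ((hG.fderiv_of_isOpen hV le_rfl).clm_apply contDiffOn_const).congr fun q hq =>
    _root_.fderiv_slice_fst_apply
      ((hG.differentiableOn (by simp)).differentiableAt (hV.mem_nhds hq)) v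

end Slices

section PartialDerivatives

variable {P : Type*} [NormedAddCommGroup P] [NormedSpace ℝ P]

def pdRSnd (i : Fin 5) (G : P × E5 → ℝ) : P × E5 → ℝ :=
  fun q => fderiv ℝ G q (0, EuclideanSpace.single i 1)

def pdMRSnd (β : Fin 5 → ℕ) (G : P × E5 → ℝ) : P × E5 → ℝ :=
  (List.finRange 5).foldr (fun i H => (pdRSnd i)^[β i] H) G

theorem ContDiffOn.pdRSnd {U : Set (P × E5)} (hU : IsOpen U) {G : P × E5 → ℝ}
    (hG : ContDiffOn ℝ ∞ G U) (i : Fin 5) : ContDiffOn ℝ ∞ (_root_.pdRSnd i G) U :=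
  (hG.fderiv_of_isOpen hU le_rfl).clm_apply contDiffOn_const

theorem ContDiffOn.pdMRSnd {U : Set (P × E5)} (hU : IsOpen U) {G : P × E5 → ℝ}
    (hG : ContDiffOn ℝ ∞ G U) (β : Fin 5 → ℕ) : ContDiffOn ℝ ∞ (_root_.pdMRSnd β G) U :=
  List.rel_foldr_iterate (fun (_ : Unit) H => ContDiffOn ℝ ∞ H U) (S := fun _ => id)
    (fun i _ _ h => h.pdRSnd hU i) β _ (a := ()) hG

theorem pdR_eq_pdRSnd {U : Set (P × E5)} (hU : IsOpen U) {G : P × E5 → ℝ}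
    (hG : DifferentiableOn ℝ G U) {p : P} {f : E5 → ℝ}
    (hf : ∀ ξ, (p, ξ) ∈ U → f ξ = G (p, ξ)) (i : Fin 5) {ξ : E5} (hξ : (p, ξ) ∈ U) :
    pdR i f ξ = pdRSnd i G (p, ξ) := by
  have hfG : f =ᶠ[𝓝 ξ] fun ξ' => G (p, ξ') :=
    mem_of_superset ((hU.preimage (Continuous.prodMk_right p)).mem_nhds hξ) hf
  rw [pdR, hfG.fderiv_eq, fderiv_slice_snd_apply (hG.differentiableAt (hU.mem_nhds hξ))]
  rfl

theorem pdMR_eq_pdMRSnd {U : Set (P × E5)} (hU : IsOpen U) {G : P × E5 → ℝ}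
    (hG : ContDiffOn ℝ ∞ G U) {p : P} {f : E5 → ℝ}
    (hf : ∀ ξ, (p, ξ) ∈ U → f ξ = G (p, ξ)) (β : Fin 5 → ℕ) {ξ : E5} (hξ : (p, ξ) ∈ U) :
    pdMR β f ξ = pdMRSnd β G (p, ξ) :=
  (List.rel_foldr_iterate
    (fun (f : E5 → ℝ) (G : P × E5 → ℝ) => ContDiffOn ℝ ∞ G U ∧ ∀ ξ, (p, ξ) ∈ U → f ξ = G (p, ξ))
    (fun i _ _ h => ⟨h.1.pdRSnd hU i, fun _ hξ =>
      pdR_eq_pdRSnd hU (h.1.differentiableOn (by simp)) h.2 i hξ⟩)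
    β _ ⟨hG, hf⟩).2 ξ hξ

end PartialDerivatives

theorem pdMR_zero (β : Fin 5 → ℕ) : pdMR β 0 = 0 :=
  List.rel_foldr_iterate (fun f (_ : Unit) => f = 0) (T := fun _ => id)
    (fun i _ _ h => by funext x; simp [h, pdR]) β _ (b := ()) rfl

theorem bL2SqR_le_of_abs_le {u : E5 → ℝ} {M : ℝ} (hu : ∀ ξ ∈ ball5, |u ξ| ≤ M) :
    bL2SqR u ≤ M ^ 2 * volume.real ball5 :=
  (le_abs_self _).trans <| norm_setIntegral_le_of_norm_le_const (f := fun ξ => ‖u ξ‖ ^ 2)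
    measure_ball_lt_top fun ξ hξ => by simpa using pow_le_pow_left₀ (abs_nonneg _) (hu ξ hξ) 2

theorem HSqR_le_of_abs_pdMR_le {m : ℕ} {f : E5 → ℝ} {M : ℝ}
    (hf : ∀ β : Fin 5 → Fin (m + 1), ∀ ξ ∈ ball5, |pdMR (fun i => β i) f ξ| ≤ M) :
    HSqR m f ≤ (m + 1) ^ 5 * (M ^ 2 * volume.real ball5) := by
  calc HSqR m f ≤ ∑ _β : Fin 5 → Fin (m + 1), M ^ 2 * volume.real ball5 :=
        Finset.sum_le_sum fun β _ => by
          split_ifs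
          · exact bL2SqR_le_of_abs_le (hf β)
          · positivity
    _ = _ := by simp

section LipschitzFamilies

variable {P : Type*} [NormedAddCommGroup P] [NormedSpace ℝ P]

theorem exists_HSqR_sub_le {V : Set (P × E5)} (hV : IsOpen V) {Φ : P × E5 → ℝ}
    (hΦ : ContDiffOn ℝ ∞ Φ V) {K : Set P} (hK : IsCompact K) (hKc : Convex ℝ K)
    (hKV : K ×ˢ closedBall 0 1 ⊆ V) (m : ℕ) :
    ∃ C, ∀ p ∈ K, ∀ q ∈ K, HSqR m (fun ξ => Φ (p, ξ) - Φ (q, ξ)) ≤ C * ‖p - q‖ ^ 2 := by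
  let U : Set ((P × P) × E5) := {x | (x.1.1, x.2) ∈ V ∧ (x.1.2, x.2) ∈ V}
  let F : (P × P) × E5 → ℝ := fun x => Φ (x.1.1, x.2) - Φ (x.1.2, x.2)
  have hU : IsOpen U := (hV.preimage (by fun_prop)).inter (hV.preimage (by fun_prop))
  have hF : ContDiffOn ℝ ∞ F U :=
    (hΦ.comp (by fun_prop) fun _ hx => hx.1).sub (hΦ.comp (by fun_prop) fun _ hx => hx.2)
  let S : Set ((P × P) × E5) := (K ×ˢ K) ×ˢ closedBall 0 1
  have hSU : S ⊆ U := fun _ ⟨⟨hp, hq⟩, hξ⟩ => ⟨hKV ⟨hp, hξ⟩, hKV ⟨hq, hξ⟩⟩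
  let D : (P × P) × E5 → (Fin 5 → Fin (m + 1)) → ℝ := fun x β => pdMRSnd (fun i => β i) F x
  obtain ⟨L, hL⟩ : ∃ L, LipschitzOnWith L D S :=
    (contDiffOn_pi.2 fun β => ((hF.pdMRSnd hU _).mono hSU)).exists_lipschitzOnWith (by simp)
      ((hKc.prod hKc).prod (convex_closedBall _ _)) ((hK.prod hK).prod (isCompact_closedBall _ _))
  refine ⟨(m + 1) ^ 5 * (L ^ 2 * volume.real ball5), fun p hp q hq => ?_⟩
  refine (HSqR_le_of_abs_pdMR_le (M := L * ‖p - q‖) fun β ξ hξ => ?_).trans_eq (by ring)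
  have hξ' : ξ ∈ closedBall (0 : E5) 1 := ball_subset_closedBall hξ
  have hpq : ((p, q), ξ) ∈ S := ⟨⟨hp, hq⟩, hξ'⟩
  have hqq : ((q, q), ξ) ∈ S := ⟨⟨hq, hq⟩, hξ'⟩
  have hslice : pdMR (fun i => β i) (fun ξ => Φ (p, ξ) - Φ (q, ξ)) ξ = D ((p, q), ξ) β :=
    pdMR_eq_pdMRSnd hU hF (fun _ _ => rfl) _ (hSU hpq)
  have hdiag : D ((q, q), ξ) β = 0 := by
    simpa [pdMR_zero] using
      (pdMR_eq_pdMRSnd hU hF (f := 0) (fun _ _ => (sub_self _).symm) _ (hSU hqq)).symm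
  calc |pdMR (fun i => β i) (fun ξ => Φ (p, ξ) - Φ (q, ξ)) ξ|
      = dist (D ((p, q), ξ) β) (D ((q, q), ξ) β) := by rw [hslice, hdiag, Real.dist_0_eq_abs]
    _ ≤ dist (D ((p, q), ξ)) (D ((q, q), ξ)) := dist_le_pi_dist _ _ β
    _ ≤ L * dist ((p, q), ξ) ((q, q), ξ) := hL.dist_le_mul _ hpq _ hqq
    _ = L * ‖p - q‖ := by simp [dist_eq_norm, Prod.norm_def]

theorem exists_sqrt_HSqR_add_HSqR_sub_le {V : Set (P × E5)} (hV : IsOpen V)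
    {Φ₁ Φ₂ : P × E5 → ℝ} (hΦ₁ : ContDiffOn ℝ ∞ Φ₁ V) (hΦ₂ : ContDiffOn ℝ ∞ Φ₂ V) {K : Set P}
    (hK : IsCompact K) (hKc : Convex ℝ K) (hKV : K ×ˢ closedBall 0 1 ⊆ V) (m₁ m₂ : ℕ) :
    ∃ C, ∀ p ∈ K, ∀ q ∈ K,
      √(HSqR m₁ (fun ξ => Φ₁ (p, ξ) - Φ₁ (q, ξ)) + HSqR m₂ (fun ξ => Φ₂ (p, ξ) - Φ₂ (q, ξ))) ≤
        C * ‖p - q‖ := by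
  obtain ⟨C₁, hC₁⟩ := exists_HSqR_sub_le hV hΦ₁ hK hKc hKV m₁
  obtain ⟨C₂, hC₂⟩ := exists_HSqR_sub_le hV hΦ₂ hK hKc hKV m₂
  refine ⟨√(C₁ + C₂), fun p hp q hq => ?_⟩
  calc _ ≤ √((C₁ + C₂) * ‖p - q‖ ^ 2) :=
        Real.sqrt_le_sqrt (by linarith [hC₁ p hp q hq, hC₂ p hp q hq])
    _ = √(C₁ + C₂) * ‖p - q‖ := by rw [Real.sqrt_mul' _ (sq_nonneg _), Real.sqrt_sq (norm_nonneg _)]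

end LipschitzFamilies

theorem A0_sq_sub_sum_Ac_sq (α : E5) : A0 α ^ 2 - ∑ j, Ac α j ^ 2 = 1 := by
  have h0 : Finset.Ioi (0 : Fin 5) = {1, 2, 3, 4} := by decide
  have h1 : Finset.Ioi (1 : Fin 5) = {2, 3, 4} := by decide
  have h2 : Finset.Ioi (2 : Fin 5) = {3, 4} := by decide
  have h3 : Finset.Ioi (3 : Fin 5) = {4} := by decide
  have h4 : Finset.Ioi (4 : Fin 5) = ∅ := by decide
  simp [A0, Ac, Fin.prod_univ_five, Fin.sum_univ_five, h0, h1, h2, h3, h4]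
  linear_combination (Real.cosh (α 1) * Real.cosh (α 2) * Real.cosh (α 3) * Real.cosh (α 4)) ^ 2 *
      Real.cosh_sq_sub_sinh_sq (α 0) +
    (Real.cosh (α 2) * Real.cosh (α 3) * Real.cosh (α 4)) ^ 2 * Real.cosh_sq_sub_sinh_sq (α 1) +
    (Real.cosh (α 3) * Real.cosh (α 4)) ^ 2 * Real.cosh_sq_sub_sinh_sq (α 2) +
    Real.cosh (α 4) ^ 2 * Real.cosh_sq_sub_sinh_sq (α 3) + Real.cosh_sq_sub_sinh_sq (α 4)

theorem A0_pos (α : E5) : 0 < A0 α :=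
  Finset.prod_pos fun _ _ => Real.cosh_pos _

theorem sum_Ac_mul_lt_A0 (α : E5) {ξ : E5} (hξ : ‖ξ‖ ≤ 1) : ∑ j, Ac α j * ξ j < A0 α := by
  have hCS := Finset.sum_mul_sq_le_sq_mul_sq Finset.univ (Ac α) (fun j => ξ j)
  rw [← EuclideanSpace.real_norm_sq_eq] at hCS
  have hξ2 : ‖ξ‖ ^ 2 ≤ 1 := pow_le_one₀ (norm_nonneg ξ) hξ
  have hsq : (∑ j, Ac α j * ξ j) ^ 2 < A0 α ^ 2 := by
    nlinarith [A0_sq_sub_sum_Ac_sq α, Finset.sum_nonneg fun j (_ : j ∈ Finset.univ) =>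
      sq_nonneg (Ac α j)]
  exact (le_abs_self _).trans_lt (abs_lt_of_sq_lt_sq hsq (A0_pos α).le)

def psiDenom (v : E5 × E5) : ℝ := A0 v.1 - ∑ j, Ac v.1 j * v.2 j

def psiDomain : Set (E5 × E5) := {v | 0 < psiDenom v}

theorem contDiff_A0 : ContDiff ℝ ∞ A0 :=
  contDiff_prod fun _ _ => Real.contDiff_cosh.comp (contDiff_piLp_apply 2)

theorem contDiff_Ac (j : Fin 5) : ContDiff ℝ ∞ (fun α => Ac α j) :=
  (contDiff_prod fun _ _ => Real.contDiff_cosh.comp (contDiff_piLp_apply 2)).mul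
    (Real.contDiff_sinh.comp (contDiff_piLp_apply 2))

theorem contDiff_psiDenom : ContDiff ℝ ∞ psiDenom :=
  (contDiff_A0.comp contDiff_fst).sub <| ContDiff.sum fun j _ =>
    ((contDiff_Ac j).comp contDiff_fst).mul ((contDiff_piLp_apply 2).comp contDiff_snd)

theorem isOpen_psiDomain : IsOpen psiDomain :=
  isOpen_lt continuous_const contDiff_psiDenom.continuous

theorem prod_closedBall_subset_psiDomain (s : Set E5) :
    s ×ˢ closedBall (0 : E5) 1 ⊆ psiDomain := fun v ⟨_, hξ⟩ =>
  sub_pos.2 (sum_Ac_mul_lt_A0 v.1 (mem_closedBall_zero_iff.1 hξ))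

theorem contDiffOn_psiA : ContDiffOn ℝ ∞ (fun v : E5 × E5 => psiA v.1 v.2) psiDomain :=
  contDiffOn_const.div contDiff_psiDenom.contDiffOn fun _ hv => hv.ne'

theorem contDiffOn_g1 : ContDiffOn ℝ ∞ (fun v : E5 × E5 => g1 v.1 v.2) psiDomain :=
  (contDiff_A0.comp contDiff_fst).contDiffOn.div (contDiff_psiDenom.contDiffOn.pow 2)
    fun _ hv => pow_ne_zero 2 (ne_of_gt hv)

theorem contDiffOn_g2 : ContDiffOn ℝ ∞ (fun v : E5 × E5 => g2 v.1 v.2) psiDomain :=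
  (contDiffOn_const.mul ((contDiff_A0.comp contDiff_fst).contDiffOn.pow 2)).div
    (contDiff_psiDenom.contDiffOn.pow 3) fun _ hv => pow_ne_zero 3 (ne_of_gt hv)

theorem contDiffOn_h1 (j : Fin 5) : ContDiffOn ℝ ∞ (fun v : E5 × E5 => h1 v.1 j v.2) psiDomain :=
  contDiffOn_psiA.fderiv_slice_fst_apply isOpen_psiDomain _

theorem contDiffOn_h2 (j : Fin 5) :
    ContDiffOn ℝ ∞ (fun v : E5 × E5 => h2 v.1 j v.2) psiDomain := by
  let W : E5 × E5 → ℝ := fun v =>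
    ∑ k, v.2 k * pdRSnd k (fun v : E5 × E5 => psiA v.1 v.2) v + psiA v.1 v.2
  have hW : ContDiffOn ℝ ∞ W psiDomain :=
    (ContDiffOn.sum fun k _ => ((contDiff_piLp_apply 2).comp contDiff_snd).contDiffOn.mul
      (contDiffOn_psiA.pdRSnd isOpen_psiDomain k)).add contDiffOn_psiA
  refine (hW.fderiv_slice_fst_apply isOpen_psiDomain (EuclideanSpace.single j 1)).congr
    fun v hv => ?_
  have hslice : IsOpen {a | (a, v.2) ∈ psiDomain} :=
    isOpen_psiDomain.preimage (continuous_id.prodMk continuous_const)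
  have hev : (fun a : E5 => (∑ k, v.2 k * pdR k (psiA a) v.2) + psiA a v.2) =ᶠ[𝓝 v.1]
      fun a => W (a, v.2) := by
    filter_upwards [hslice.mem_nhds hv] with a ha
    congr 1
    refine Finset.sum_congr rfl fun k _ => congrArg _ ?_
    exact pdR_eq_pdRSnd isOpen_psiDomain (contDiffOn_psiA.differentiableOn (by simp))
      (fun _ _ => rfl) k ha
  exact congrArg (fun L : E5 →L[ℝ] ℝ => L (EuclideanSpace.single j 1)) hev.fderiv_eq

/-- Lipschitz estimate (from Lemma 7.1 / nonlinearestimates2):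
`‖g_α − g_β‖ + ‖h_{α,j} − h_{β,j}‖ ≤ C|α − β|` for small `α, β`, in the
`H³(B⁵) × H²(B⁵)` norm. -/
theorem stmt_17 :
    ∃ δ C : ℝ, 0 < δ ∧ 0 < C ∧
      ∀ α β : E5, ‖α‖ ≤ δ → ‖β‖ ≤ δ → ∀ j : Fin 5,
        Real.sqrt (HSqR 3 (fun ξ => g1 α ξ - g1 β ξ) + HSqR 2 (fun ξ => g2 α ξ - g2 β ξ)) +
            Real.sqrt (HSqR 3 (fun ξ => h1 α j ξ - h1 β j ξ) +
              HSqR 2 (fun ξ => h2 α j ξ - h2 β j ξ)) ≤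
          C * ‖α - β‖ := by
  obtain ⟨Cg, hCg⟩ := exists_sqrt_HSqR_add_HSqR_sub_le isOpen_psiDomain contDiffOn_g1
    contDiffOn_g2 (isCompact_closedBall 0 1) (convex_closedBall 0 1)
    (prod_closedBall_subset_psiDomain _) 3 2
  choose Ch hCh using fun j => exists_sqrt_HSqR_add_HSqR_sub_le isOpen_psiDomain
    (contDiffOn_h1 j) (contDiffOn_h2 j) (isCompact_closedBall 0 1) (convex_closedBall 0 1)
    (prod_closedBall_subset_psiDomain _) 3 2
  refine ⟨1, |Cg| + ∑ j, |Ch j| + 1, one_pos, by positivity, fun α β hα hβ j => ?_⟩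
  rw [← mem_closedBall_zero_iff] at hα hβ
  have hChj : Ch j ≤ ∑ j, |Ch j| :=
    (le_abs_self _).trans (Finset.single_le_sum (fun j _ => abs_nonneg (Ch j)) (Finset.mem_univ j))
  calc _ ≤ Cg * ‖α - β‖ + Ch j * ‖α - β‖ := add_le_add (hCg α hα β hβ) (hCh j α hα β hβ)
    _ ≤ (|Cg| + ∑ j, |Ch j| + 1) * ‖α - β‖ := by
      nlinarith [le_abs_self Cg, norm_nonneg (α - β)]

end
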